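/- In any execution of the synchronizer S_VP, if robot r_i changes state in cycle ψ_i(j), the neighbor-state invariant holds: at the observation time o_i(j) of r_i's j-th state change, every neighbor r_{i'} of r_i is in state c(j) or c(j+1), where c(j) denotes the j-th state in the common cyclic progression Y, B, G, Y, B, G, … -/
import Mathlib


/-- Neighbor-state invariant of `S_VP`: model each robot's progression by a
counter which a robot may increment only if every neighbor's counter equals
its own or its own plus one. Starting from all counters equal, neighboring
robots' counters always differ by at most 1. -/
theorem neighbor_counter_invariant {V : Type*} [DecidableEq V]
    (adj : V → V → Prop) (hsym : Symmetric adj)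
    (h : ℕ → V → ℕ) (h0 : ∀ v, h 0 v = 0)
    (hstep : ∀ t, h (t + 1) = h t ∨
      ∃ v, (∀ u, adj v u → h t u = h t v ∨ h t u = h t v + 1) ∧
        h (t + 1) = Function.update (h t) v (h t v + 1)) :
    ∀ t u v, adj u v → h t u ≤ h t v + 1 := by
  intro t
  induction t with
  | zero => intro u v _; simp [h0]
  | succ t ih =>
    intro u v huv
    rcases hstep t with heq | ⟨w, hw, heq⟩
    · rw [heq]; exact ih u v huv
    · rw [heq]
      by_cases hu : u = w
      · subst hu
        by_cases hv : v = u
        · subst hv; simp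
        · rw [Function.update_self, Function.update_of_ne hv]
          rcases hw v huv with h1 | h1 <;> omega
      · rw [Function.update_of_ne hu]
        by_cases hv : v = w
        · subst hv
          rw [Function.update_self]
          have := ih u v huv
          omega
        · rw [Function.update_of_ne hv]; exact ih u v huv
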